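/- arXiv:math/9802046 — 2 statements merged into one kernel-verified Lean document; each statement's English description precedes it below -/
import Mathlib

section
/- If m is a frugal positive integer and n is an economical positive integer, then m·n is economical; that is, if h(m) > 0 and h(n) ≥ 0, then h(m·n) ≥ 0. -/
/-- Number of digits of `n` in base `B`. -/
def dig (B n : ℕ) : ℕ := (Nat.digits B n).length

/-- Number of digits needed to write the prime power factorisation of `n` in base `B`. -/
def phi (B n : ℕ) : ℕ :=
  ∑ p ∈ n.factorization.support,
    (dig B p + if n.factorization p = 1 then 0 else dig B (n.factorization p))

/-- `h B n = δ(n) - φ(n)` as an integer. -/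
def hEcon (B n : ℕ) : ℤ := (dig B n : ℤ) - (phi B n : ℤ)

/-! Both digit counts are subadditive up to a constant: `δ(m) + δ(n) ≤ δ(mn) + 1`, and
`φ(mn) ≤ φ(m) + φ(n)` because a prime `p` common to `m` and `n` is written once instead of twice, and
the `δ(p)` digits saved pay for merging the exponents: `δ(a + b) ≤ δ(a) + δ(b)`, where `δ(a)` exceeds
`δ'(a)` only for `a = 1`, by one digit, and `δ(2) ≤ δ(p)`. Hence `h(mn) ≥ h(m) + h(n) - 1`. -/

namespace Finsupp

theorem sum_add_index_le {α M N : Type*} [AddZeroClass M] [AddCommMonoid N] [PartialOrder N]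
    [IsOrderedAddMonoid N] {f g : α →₀ M} {h : α → M → N} (h_zero : ∀ a, h a 0 = 0)
    (h_add : ∀ a ∈ f.support, ∀ b₁ b₂, h a (b₁ + b₂) ≤ h a b₁ + h a b₂) :
    (f + g).sum h ≤ f.sum h + g.sum h := by
  classical
  rw [sum_of_support_subset f Finset.subset_union_left h fun a _ ↦ h_zero a,
    sum_of_support_subset g Finset.subset_union_right h fun a _ ↦ h_zero a,
    sum_of_support_subset (f + g) support_add h fun a _ ↦ h_zero a, ← Finset.sum_add_distrib]
  refine Finset.sum_le_sum fun a _ ↦ ?_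
  by_cases ha : a ∈ f.support
  · exact h_add a ha _ _
  · simp [notMem_support_iff.mp ha, h_zero]

end Finsupp

section Digits

variable {B : ℕ}

lemma dig_le_iff (hB : 2 ≤ B) {n k : ℕ} : dig B n ≤ k ↔ n < B ^ k :=
  Nat.digits_length_le_iff hB n

lemma le_dig_iff (hB : 2 ≤ B) {n k : ℕ} : k < dig B n ↔ B ^ k ≤ n :=
  Nat.lt_digits_length_iff hB n

lemma dig_pos {n : ℕ} (hn : n ≠ 0) : 0 < dig B n :=
  List.length_pos_iff.mpr (Nat.digits_ne_nil_iff_ne_zero.mpr hn)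

lemma dig_mono {a b : ℕ} (h : a ≤ b) : dig B a ≤ dig B b :=
  Nat.le_length_digits_le B a b h

lemma dig_one_le (hB : 2 ≤ B) : dig B 1 ≤ 1 :=
  (dig_le_iff hB).mpr (by rwa [pow_one])

lemma dig_add_le (hB : 2 ≤ B) (a b : ℕ) : dig B (a + b) ≤ dig B a + dig B b := by
  rcases eq_or_ne a 0 with rfl | ha
  · simp
  rcases eq_or_ne b 0 with rfl | hb
  · simp
  have two_le_pow {n : ℕ} (hn : n ≠ 0) : 2 ≤ B ^ dig B n :=
    hB.trans (Nat.le_self_pow (dig_pos hn).ne' B)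
  rw [dig_le_iff hB, pow_add]
  calc a + b < B ^ dig B a + B ^ dig B b :=
        Nat.add_lt_add ((dig_le_iff hB).mp le_rfl) ((dig_le_iff hB).mp le_rfl)
    _ ≤ B ^ dig B a * B ^ dig B b := add_le_mul (two_le_pow ha) (two_le_pow hb)

lemma dig_add_dig_le_dig_mul_add_one (hB : 2 ≤ B) {m n : ℕ} (hm : m ≠ 0) (hn : n ≠ 0) :
    dig B m + dig B n ≤ dig B (m * n) + 1 := by
  have hm' : B ^ (dig B m - 1) ≤ m := (le_dig_iff hB).mp (Nat.sub_one_lt (dig_pos hm).ne')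
  have hn' : B ^ (dig B n - 1) ≤ n := (le_dig_iff hB).mp (Nat.sub_one_lt (dig_pos hn).ne')
  have : dig B m - 1 + (dig B n - 1) < dig B (m * n) :=
    (le_dig_iff hB).mpr (pow_add B _ _ ▸ Nat.mul_le_mul hm' hn')
  have := dig_pos (B := B) hm
  have := dig_pos (B := B) hn
  omega

end Digits

-- Zero at `a = 0`, so that `φ` is a `Finsupp.sum`.
def primePowerCost (B p a : ℕ) : ℕ :=
  if a = 0 then 0 else dig B p + if a = 1 then 0 else dig B a

lemma phi_eq_sum_primePowerCost (B n : ℕ) :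
    phi B n = n.factorization.sum (primePowerCost B) :=
  Finset.sum_congr rfl fun p hp ↦ by simp [primePowerCost, Finsupp.mem_support_iff.mp hp]

lemma primePowerCost_add_le {B p : ℕ} (hB : 2 ≤ B) (hp : 2 ≤ p) (a b : ℕ) :
    primePowerCost B p (a + b) ≤ primePowerCost B p a + primePowerCost B p b := by
  rcases eq_or_ne a 0 with rfl | ha
  · simp [primePowerCost]
  rcases eq_or_ne b 0 with rfl | hb
  · simp [primePowerCost]
  have hab := dig_add_le hB a b
  have h1 := dig_one_le hB
  have hp1 : 1 ≤ dig B p := dig_pos (by omega)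
  have hp2 : dig B (1 + 1) ≤ dig B p := dig_mono hp
  simp only [primePowerCost, if_neg ha, if_neg hb, if_neg (by omega : a + b ≠ 0),
    if_neg (by omega : a + b ≠ 1)]
  split_ifs <;> subst_vars <;> omega

lemma phi_mul_le {B m n : ℕ} (hB : 2 ≤ B) (hm : m ≠ 0) (hn : n ≠ 0) :
    phi B (m * n) ≤ phi B m + phi B n := by
  simp only [phi_eq_sum_primePowerCost, Nat.factorization_mul hm hn]
  refine Finsupp.sum_add_index_le (fun _ ↦ if_pos rfl) fun p hp ↦ ?_
  exact primePowerCost_add_le hB (Nat.prime_of_mem_primeFactors hp).two_le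

theorem statement_8 (B : ℕ) (hB : 2 ≤ B) (m n : ℕ) (hm : 0 < m) (hn : 0 < n)
    (hfrugal : 0 < hEcon B m) (hecon : 0 ≤ hEcon B n) :
    0 ≤ hEcon B (m * n) := by
  have hdig := dig_add_dig_le_dig_mul_add_one hB hm.ne' hn.ne'
  have hphi := phi_mul_le hB hm.ne' hn.ne'
  simp only [hEcon] at *
  omega
end

section
/- Assume Dickson's conjecture: for every finite family of linear forms f_i(x) = a_i·x + b_i (i = 1,…,t) with positive integer coefficients a_i and nonnegative integer constants b_i, if there is no integer m > 1 dividing the product f_1(n)·f_2(n)⋯f_t(n) for every natural number n, then there are infinitely many natural numbers n for which all the values f_1(n), …, f_t(n) are simultaneously prime. Then for every base B ≥ 2 and every t ≥ 1, there exists a positive integer N such that all of N, N+1, …, N+t−1 are economical (h(N+j) ≥ 0 for 0 ≤ j ≤ t−1). -/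
/-! Choose distinct primes `q i > B + t` and an exponent `A` so large that every
`c i = (i + 1) * q i ^ A` is frugal. By the Chinese remainder theorem there is an `r` divisible
by `(t !)²` such that `q i ^ A` divides `r + i + 1` exactly. With `C = t ! * ∏ i, q i ^ A`, the
linear forms `(C * n + r + i + 1) / c i` have no fixed prime divisor: a prime dividing `C` does
not divide their values at `n = 0`, and a prime not dividing `C` exceeds `t`, so some residue
avoids the at most `t` roots. Dickson's conjecture makes them simultaneously prime, equal to some
`P i > C`, and then `N + i = c i * P i` with `N = C * n + r + 1`, a frugal number times a new
prime, is economical. -/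

open Nat Finset

lemma dig_eq_log_add_one {B n : ℕ} (hB : 1 < B) (hn : n ≠ 0) : dig B n = Nat.log B n + 1 :=
  Nat.length_digits B n hB hn

lemma dig_add_dig_le_dig_mul {B m n : ℕ} (hB : 1 < B) (hm : m ≠ 0) (hn : n ≠ 0) :
    dig B m + dig B n ≤ dig B (m * n) + 1 := by
  have hlog : Nat.log B m + Nat.log B n ≤ Nat.log B (m * n) := by
    refine (Nat.le_log_iff_pow_le hB (mul_ne_zero hm hn)).mpr ?_
    rw [pow_add]
    exact Nat.mul_le_mul (Nat.pow_log_le_self B hm) (Nat.pow_log_le_self B hn)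
  rw [dig_eq_log_add_one hB hm, dig_eq_log_add_one hB hn,
    dig_eq_log_add_one hB (mul_ne_zero hm hn)]
  omega

lemma exists_add_dig_le {B : ℕ} (hB : 1 < B) (K : ℕ) : ∃ A, 0 < A ∧ K + dig B A ≤ A := by
  refine ⟨B ^ (K + 2), by positivity, ?_⟩
  rw [dig_eq_log_add_one hB (by positivity), Nat.log_pow hB]
  have h2 : 2 ^ (K + 2) ≤ B ^ (K + 2) := Nat.pow_le_pow_left hB _
  have hK : K < 2 ^ K := Nat.lt_two_pow_self
  rw [pow_add] at h2
  omega

lemma phi_mul_of_coprime {B m n : ℕ} (hm : m ≠ 0) (hn : n ≠ 0) (h : Nat.Coprime m n) :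
    phi B (m * n) = phi B m + phi B n := by
  have hdisj : Disjoint m.factorization.support n.factorization.support := by
    simpa [Nat.support_factorization] using h.disjoint_primeFactors
  unfold phi
  rw [Nat.factorization_mul hm hn, Finsupp.support_add_eq hdisj, Finset.sum_union hdisj]
  congr 1 <;> refine Finset.sum_congr rfl fun p hp => ?_
  · have h0 : n.factorization p = 0 :=
      Finsupp.notMem_support_iff.mp (Finset.disjoint_left.mp hdisj hp)
    simp [h0]
  · have h0 : m.factorization p = 0 :=
      Finsupp.notMem_support_iff.mp (Finset.disjoint_right.mp hdisj hp)
    simp [h0]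

lemma phi_of_prime {B p : ℕ} (hp : p.Prime) : phi B p = dig B p := by
  simp [phi, hp.factorization]

lemma phi_prime_pow_le {B p A : ℕ} (hp : p.Prime) (hA : A ≠ 0) :
    phi B (p ^ A) ≤ dig B p + dig B A := by
  simp only [phi, hp.factorization_pow, Finsupp.support_single _ hA,
    Finset.sum_singleton, Finsupp.single_eq_same]
  split <;> omega

lemma hEcon_mul_prime_nonneg {B c P : ℕ} (hB : 1 < B) (hc : 0 < hEcon B c) (hP : P.Prime)
    (hPc : ¬ P ∣ c) : 0 ≤ hEcon B (c * P) := by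
  have hc0 : c ≠ 0 := by rintro rfl; exact hPc (dvd_zero P)
  have hphi : phi B (c * P) = phi B c + dig B P := by
    rw [phi_mul_of_coprime hc0 hP.ne_zero ((hP.coprime_iff_not_dvd.mpr hPc).symm),
      phi_of_prime hP]
  have hdig := dig_add_dig_le_dig_mul hB hc0 hP.ne_zero
  unfold hEcon at *
  omega

lemma hEcon_mul_prime_pow_pos {B c q A : ℕ} (hB : 1 < B) (hc : c ≠ 0) (hq : q.Prime)
    (hBq : B ≤ q) (hcq : Nat.Coprime c q) (hA : 0 < A)
    (hbound : phi B c + dig B q + dig B A ≤ A) : 0 < hEcon B (c * q ^ A) := by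
  have hqA : q ^ A ≠ 0 := pow_ne_zero _ hq.ne_zero
  have hphi : phi B (c * q ^ A) ≤ A := by
    rw [phi_mul_of_coprime hc hqA (hcq.pow_right A)]
    have := phi_prime_pow_le (B := B) hq hA.ne'
    omega
  have hlog : A ≤ Nat.log B (c * q ^ A) := by
    refine (Nat.le_log_iff_pow_le hB (mul_ne_zero hc hqA)).mpr ?_
    calc B ^ A ≤ q ^ A := Nat.pow_le_pow_left hBq A
      _ ≤ c * q ^ A := Nat.le_mul_of_pos_left _ (Nat.pos_of_ne_zero hc)
  have hdig := dig_eq_log_add_one hB (mul_ne_zero hc hqA)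
  unfold hEcon
  omega

lemma exists_injective_primes_gt (m t : ℕ) :
    ∃ q : Fin t → ℕ, Function.Injective q ∧ (∀ i, (q i).Prime) ∧ ∀ i, m < q i := by
  have hmono := Nat.nth_strictMono Nat.infinite_setOfPred_prime
  refine ⟨fun i => nth Nat.Prime (m + 1 + i), fun i j hij => ?_, fun i => prime_nth_prime _,
    fun i => ?_⟩
  · have := hmono.injective hij
    exact Fin.ext (by omega)
  · show m < nth Nat.Prime (m + 1 + i)
    have : m + 1 + i ≤ nth Nat.Prime (m + 1 + i) := hmono.le_apply
    omega

lemma exists_dvd_and_modEq {ι : Type*} [Fintype ι] (M : ℕ) (m a : ι → ℕ)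
    (hm : ∀ i, m i ≠ 0) (hpair : Pairwise (Function.onFun Nat.Coprime m))
    (hM : ∀ i, Nat.Coprime M (m i)) :
    ∃ r, M ∣ r ∧ ∀ i, r ≡ a i [MOD m i] := by
  obtain ⟨r₀, hr₀⟩ := Nat.chineseRemainderOfFinset a m univ (fun i _ => hm i)
    (fun i _ j _ hij => hpair hij)
  have hMprod : Nat.Coprime M (∏ i, m i) := Nat.Coprime.prod_right fun i _ => hM i
  obtain ⟨r, hrM, hr⟩ := Nat.chineseRemainder hMprod 0 r₀
  exact ⟨r, Nat.modEq_zero_iff_dvd.mp hrM, fun i =>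
    (hr.of_dvd (Finset.dvd_prod_of_mem m (mem_univ i))).trans (hr₀ i (mem_univ i))⟩

lemma exists_dvd_and_pow_dvd_and_not_pow_succ_dvd {ι : Type*} [Fintype ι] (M A : ℕ)
    (q k : ι → ℕ) (hq : ∀ i, (q i).Prime) (hqinj : Function.Injective q)
    (hMq : ∀ i, Nat.Coprime M (q i)) (hk : ∀ i, k i ≤ q i ^ A) :
    ∃ r, M ∣ r ∧ ∀ i, q i ^ A ∣ r + k i ∧ ¬ q i ^ (A + 1) ∣ r + k i := by
  obtain ⟨r, hMr, hr⟩ := exists_dvd_and_modEq M (fun i => q i ^ (A + 1))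
    (fun i => q i ^ A - k i) (fun i => pow_ne_zero _ (hq i).ne_zero)
    (fun i j hij => ((Nat.coprime_primes (hq i) (hq j)).mpr (hqinj.ne hij)).pow _ _)
    (fun i => (hMq i).pow_right _)
  have hmod : ∀ i, r + k i ≡ q i ^ A [MOD q i ^ (A + 1)] := fun i => by
    simpa [Nat.sub_add_cancel (hk i)] using (hr i).add_right (k i)
  refine ⟨r, hMr, fun i => ⟨?_, fun hdvd => ?_⟩⟩
  · exact Nat.modEq_zero_iff_dvd.mp
      (((hmod i).of_dvd (pow_dvd_pow _ A.le_succ)).trans (Nat.modEq_zero_iff_dvd.mpr dvd_rfl))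
  · have hq0 : q i ^ (A + 1) ∣ q i ^ A :=
      Nat.modEq_zero_iff_dvd.mp ((hmod i).symm.trans (Nat.modEq_zero_iff_dvd.mpr hdvd))
    have := (Nat.pow_dvd_pow_iff_le_right (hq i).one_lt).mp hq0
    omega

lemma exists_forall_not_dvd_mul_add {p t : ℕ} (hp : p.Prime) (htp : t < p) (a b : Fin t → ℕ)
    (ha : ∀ i, ¬ p ∣ a i) : ∃ n, ∀ i, ¬ p ∣ a i * n + b i := by
  have := Fact.mk hp
  let root : Fin t → ZMod p := fun i => -(b i : ZMod p) / a i
  obtain ⟨x, hx⟩ : ∃ x, ∀ i, root i ≠ x := by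
    by_contra! hsurj
    have := Fintype.card_le_of_surjective root hsurj
    simp only [ZMod.card, Fintype.card_fin] at this
    omega
  refine ⟨x.val, fun i hdvd => hx i ?_⟩
  have hai : (a i : ZMod p) ≠ 0 := by rw [Ne, ZMod.natCast_eq_zero_iff]; exact ha i
  have hroot : (a i : ZMod p) * x + b i = 0 := by
    have := (ZMod.natCast_eq_zero_iff _ _).mpr hdvd
    push_cast at this
    rwa [ZMod.natCast_zmod_val] at this
  rw [show root i = -(b i : ZMod p) / a i from rfl, div_eq_iff hai]
  linear_combination -hroot

lemma not_exists_fixed_divisor {t C : ℕ} (a b : Fin t → ℕ) (ha : ∀ i, a i ∣ C)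
    (hb : ∀ i, Nat.Coprime (b i) C) (hC : ∀ p, p.Prime → p ≤ t → p ∣ C) :
    ¬ ∃ m, 1 < m ∧ ∀ n, m ∣ ∏ i, (a i * n + b i) := by
  rintro ⟨m, hm, hdvd⟩
  set p := m.minFac
  have hp : p.Prime := Nat.minFac_prime hm.ne'
  have hpdvd : ∀ n, p ∣ ∏ i, (a i * n + b i) := fun n => (Nat.minFac_dvd m).trans (hdvd n)
  by_cases hpC : p ∣ C
  · have hcop : Nat.Coprime (∏ i, b i) C := Nat.Coprime.prod_left fun i _ => hb i
    have hp0 := hpdvd 0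
    simp only [mul_zero, zero_add] at hp0
    exact Nat.Prime.not_coprime_iff_dvd.mpr ⟨p, hp, hp0, hpC⟩ hcop
  · have htp : t < p := by
      by_contra! hpt
      exact hpC (hC p hp hpt)
    obtain ⟨n, hn⟩ := exists_forall_not_dvd_mul_add hp htp a b fun i h => hpC (h.trans (ha i))
    obtain ⟨i, -, hi⟩ := (Prime.dvd_finsetProd_iff hp.prime _).mp (hpdvd n)
    exact hn i hi

def DicksonConjecture : Prop :=
  ∀ (t : ℕ) (a b : Fin t → ℕ), (∀ i, 0 < a i) →
    (¬ ∃ m : ℕ, 1 < m ∧ ∀ n : ℕ, m ∣ ∏ i, (a i * n + b i)) →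
    {n : ℕ | ∀ i, Nat.Prime (a i * n + b i)}.Infinite

lemma exists_economical_run {B t C r : ℕ} (hD : DicksonConjecture) (hB : 1 < B)
    (c : Fin t → ℕ) (hc : ∀ i, 0 < hEcon B (c i)) (hC0 : C ≠ 0) (hcC : ∀ i, c i ∣ C)
    (hcr : ∀ i, c i ∣ r + (i + 1)) (hCt : ∀ p, p.Prime → p ≤ t → p ∣ C)
    (hcop : ∀ i, Nat.Coprime ((r + (i + 1)) / c i) C) :
    ∃ N, 0 < N ∧ ∀ j < t, 0 ≤ hEcon B (N + j) := by
  have hc0 : ∀ i, c i ≠ 0 := fun i => ne_zero_of_dvd_ne_zero hC0 (hcC i)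
  set a : Fin t → ℕ := fun i => C / c i
  set b : Fin t → ℕ := fun i => (r + (i + 1)) / c i
  have hform : ∀ i n, c i * (a i * n + b i) = C * n + r + (i + 1) := by
    intro i n
    simp only [a, b, mul_add, ← mul_assoc, Nat.mul_div_cancel' (hcC i),
      Nat.mul_div_cancel' (hcr i), add_assoc]
  have hcleC : ∀ i, c i ≤ C := fun i => Nat.le_of_dvd (Nat.pos_of_ne_zero hC0) (hcC i)
  have ha : ∀ i, 0 < a i := fun i => Nat.div_pos (hcleC i) (Nat.pos_of_ne_zero (hc0 i))
  have hadm := not_exists_fixed_divisor a b (fun i => Nat.div_dvd_of_dvd (hcC i)) hcop hCt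
  obtain ⟨n, hprime, hCn⟩ := (hD t a b ha hadm).exists_gt C
  refine ⟨C * n + r + 1, by omega, fun j hj => ?_⟩
  let i : Fin t := ⟨j, hj⟩
  have hcP : c i < a i * n + b i := by
    have := Nat.le_mul_of_pos_left n (ha i)
    have := hcleC i
    omega
  have hPc : ¬ a i * n + b i ∣ c i := fun h =>
    absurd (Nat.le_of_dvd (Nat.pos_of_ne_zero (hc0 i)) h) (not_le.mpr hcP)
  have := hEcon_mul_prime_nonneg hB (hc i) (hprime i) hPc
  rwa [hform, show C * n + r + (j + 1) = C * n + r + 1 + j by omega] at this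

lemma eq_of_dvd_add_of_dvd_add {p r i k : ℕ} (hi : p ∣ r + i) (hk : p ∣ r + k) (hip : i < p)
    (hkp : k < p) : i = k :=
  (Nat.ModEq.add_left_cancel' r
    ((Nat.modEq_zero_iff_dvd.mpr hi).trans (Nat.modEq_zero_iff_dvd.mpr hk).symm)).eq_of_lt_of_lt
    hip hkp

lemma succ_mul_pow_dvd_add {t A r : ℕ} {q : Fin t → ℕ} (hq : ∀ i, (q i).Prime)
    (htq : ∀ i, t < q i) (hr : t ! ∣ r) (hqr : ∀ i, q i ^ A ∣ r + (i + 1)) (i : Fin t) :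
    (i + 1) * q i ^ A ∣ r + (i + 1) := by
  have hi : (i : ℕ) + 1 ∣ r := (Nat.dvd_factorial (i : ℕ).succ_pos i.isLt).trans hr
  have hcop : Nat.Coprime ((i : ℕ) + 1) (q i) :=
    (Nat.coprime_of_lt_prime (Nat.succ_ne_zero i) (by have := htq i; omega) (hq i)).symm
  exact (hcop.pow_right A).mul_dvd_of_dvd_of_dvd (Nat.dvd_add_self_right.mpr hi) (hqr i)

lemma coprime_div_succ_mul_pow {t A r : ℕ} {q : Fin t → ℕ} (hq : ∀ i, (q i).Prime)
    (htq : ∀ i, t < q i) (hA : 0 < A) (hr : t ! * t ! ∣ r)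
    (hqr : ∀ i, q i ^ A ∣ r + (i + 1)) (hqr' : ∀ i, ¬ q i ^ (A + 1) ∣ r + (i + 1))
    (i : Fin t) :
    Nat.Coprime ((r + (i + 1)) / ((i + 1) * q i ^ A)) (t ! * ∏ k, q k ^ A) := by
  obtain ⟨b, hb⟩ := succ_mul_pow_dvd_add hq htq ((dvd_mul_right _ _).trans hr) hqr i
  rw [hb, Nat.mul_div_cancel_left _ (Nat.mul_pos (i : ℕ).succ_pos (pow_pos (hq i).pos A))]
  have hbF : Nat.Coprime b t ! := by
    obtain ⟨w, hw⟩ := Nat.dvd_factorial (i : ℕ).succ_pos i.isLt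
    obtain ⟨u, hu⟩ := hr
    -- `r` is divisible by `(i + 1) * t !`, so `q i ^ A * b ≡ 1 [MOD t !]`
    have hb1 : q i ^ A * b = 1 + t ! * (w * u) := by
      apply Nat.eq_of_mul_eq_mul_left (i : ℕ).succ_pos
      calc ((i : ℕ) + 1) * (q i ^ A * b) = t ! * t ! * u + (i + 1) := by rw [← hu, hb]; ring
        _ = ((i + 1) * w) * t ! * u + (i + 1) := by rw [← hw]
        _ = (i + 1) * (1 + t ! * (w * u)) := by ring
    have : Nat.Coprime (q i ^ A * b) t ! := by
      rw [hb1, Nat.coprime_add_mul_left_left]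
      exact Nat.coprime_one_left _
    exact this.coprime_mul_left
  have hbq : ∀ k, Nat.Coprime b (q k) := by
    refine fun k => ((hq k).coprime_iff_not_dvd.mpr fun hdvd => ?_).symm
    by_cases hki : k = i
    · subst hki
      apply hqr' k
      rw [hb, pow_succ]
      exact mul_dvd_mul (dvd_mul_left _ _) hdvd
    · have hi : q k ∣ r + (i + 1) := hb ▸ dvd_mul_of_dvd_right hdvd _
      have hk : q k ∣ r + (k + 1) := (dvd_pow_self _ hA.ne').trans (hqr k)
      have := eq_of_dvd_add_of_dvd_add hk hi (by have := htq k; omega) (by have := htq k; omega)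
      exact hki (Fin.ext (by omega))
  exact hbF.mul_right (Nat.Coprime.prod_right fun k _ => (hbq k).pow_right A)

theorem statement_16_general
    (HDickson : ∀ (t : ℕ) (a b : Fin t → ℕ), (∀ i, 0 < a i) →
      (¬ ∃ m : ℕ, 1 < m ∧ ∀ n : ℕ, m ∣ ∏ i, (a i * n + b i)) →
      {n : ℕ | ∀ i, Nat.Prime (a i * n + b i)}.Infinite)
    (B : ℕ) (hB : 2 ≤ B) (t : ℕ) :
    ∃ N : ℕ, 0 < N ∧ ∀ j < t, 0 ≤ hEcon B (N + j) := by
  obtain ⟨q, hqinj, hq, hBtq⟩ := exists_injective_primes_gt (B + t) t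
  have htq : ∀ i, t < q i := fun i => by have := hBtq i; omega
  have hFq : ∀ i, Nat.Coprime (t ! * t !) (q i) := fun i =>
    have h := ((hq i).coprime_factorial_of_lt (htq i)).symm
    h.mul_left h
  obtain ⟨A, hA, hAK⟩ :=
    exists_add_dig_le hB (∑ i : Fin t, (phi B ((i : ℕ) + 1) + dig B (q i)))
  obtain ⟨r, hr, hqr⟩ := exists_dvd_and_pow_dvd_and_not_pow_succ_dvd (t ! * t !) A q
    (fun i => (i : ℕ) + 1) hq hqinj hFq
    (fun i => by have := htq i; have := Nat.le_self_pow hA.ne' (q i); omega)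
  have hfrugal : ∀ i : Fin t, 0 < hEcon B ((i + 1) * q i ^ A) := fun i => by
    refine hEcon_mul_prime_pow_pos hB (i : ℕ).succ_ne_zero (hq i) (by have := hBtq i; omega)
      (Nat.coprime_of_lt_prime (i : ℕ).succ_ne_zero (by have := htq i; omega) (hq i)).symm hA ?_
    have := single_le_sum (f := fun i : Fin t => phi B ((i : ℕ) + 1) + dig B (q i))
      (fun _ _ => Nat.zero_le _) (mem_univ i)
    omega
  exact exists_economical_run (C := t ! * ∏ i, q i ^ A) HDickson hB _ hfrugal
    (mul_ne_zero (Nat.factorial_ne_zero t)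
      (prod_ne_zero_iff.mpr fun i _ => pow_ne_zero _ (hq i).ne_zero))
    (fun i => mul_dvd_mul (Nat.dvd_factorial (i : ℕ).succ_pos i.isLt)
      (dvd_prod_of_mem _ (mem_univ i)))
    (succ_mul_pow_dvd_add hq htq ((dvd_mul_right _ _).trans hr) fun i => (hqr i).1)
    (fun p hp hpt => (hp.dvd_factorial.mpr hpt).trans (dvd_mul_right _ _))
    (coprime_div_succ_mul_pow hq htq hA hr (fun i => (hqr i).1) fun i => (hqr i).2)

theorem statement_16
    (HDickson : ∀ (t : ℕ) (a b : Fin t → ℕ), (∀ i, 0 < a i) →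
      (¬ ∃ m : ℕ, 1 < m ∧ ∀ n : ℕ, m ∣ ∏ i, (a i * n + b i)) →
      {n : ℕ | ∀ i, Nat.Prime (a i * n + b i)}.Infinite)
    (B : ℕ) (hB : 2 ≤ B) (t : ℕ) (ht : 1 ≤ t) :
    ∃ N : ℕ, 0 < N ∧ ∀ j < t, 0 ≤ hEcon B (N + j) :=
  statement_16_general HDickson B hB t
end
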